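/- arXiv:2301.00367 — 2 statements merged into one kernel-verified Lean document; each statement's English description precedes it below -/
import Mathlib

section
/- (Countable saturation of ultraproducts) Let U be a countably incomplete ultrafilter on a set I, and for each k ∈ ℕ let Aₖ : I → Set(Ω) be a family of subsets of a set Ω such that for every n ∈ ℕ, the set {i ∈ I : ⋂_{k ≤ n} Aₖ(i) ≠ ∅} belongs to U. Then there exists a function g : I → Ω such that for every k ∈ ℕ, {i ∈ I : g(i) ∈ Aₖ(i)} ∈ U. -/
/-!
Intersect the witnesses `X n` of countable incompleteness with the sets where the first `n`
constraints are jointly satisfiable. This gives a decreasing sequence `Z n` of members of `U`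
with empty intersection, so every `i` lies in only finitely many `Z n`; choosing `g i` to satisfy
all constraints up to the last `n` with `i ∈ Z n` makes `{i | g i ∈ A k i} ⊇ Z k`.
-/

open Set

section

variable {I Ω : Type*}

theorem exists_depth_of_antitone_of_iInter_eq_empty {Z : ℕ → Set I} (hZ : Antitone Z)
    (hZ_inter : ⋂ n, Z n = ∅) :
    ∃ N : I → ℕ, ∀ n, ∀ i ∈ Z n, n ≤ N i ∧ i ∈ Z (N i) := by
  classical
  have hexit : ∀ i, ∃ m, i ∉ Z m := fun i => by
    have : i ∉ ⋂ n, Z n := hZ_inter ▸ notMem_empty i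
    simpa only [mem_iInter, not_forall] using this
  choose m hm using hexit
  refine ⟨fun i => Nat.findGreatest (fun n => i ∈ Z n) (m i), fun n i hi => ?_⟩
  have hnm : n ≤ m i := le_of_lt <| lt_of_not_ge fun hmn => hm i (hZ hmn hi)
  exact ⟨Nat.le_findGreatest hnm hi, Nat.findGreatest_spec (P := fun n => i ∈ Z n) hnm hi⟩

theorem exists_forall_mem_of_antitone [Nonempty Ω] {Z : ℕ → Set I} (hZ : Antitone Z)
    (hZ_inter : ⋂ n, Z n = ∅) {B : ℕ → I → Set Ω} (hB : ∀ i, Antitone (B · i))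
    (hB_ne : ∀ n, ∀ i ∈ Z n, (B n i).Nonempty) :
    ∃ g : I → Ω, ∀ n, ∀ i ∈ Z n, g i ∈ B n i := by
  obtain ⟨N, hN⟩ := exists_depth_of_antitone_of_iInter_eq_empty hZ hZ_inter
  have hchoice : ∀ i, ∃ x, i ∈ Z (N i) → x ∈ B (N i) i := fun i => by
    by_cases hi : i ∈ Z (N i)
    · exact (hB_ne _ i hi).imp fun x hx _ => hx
    · exact ⟨Classical.arbitrary Ω, fun h => absurd h hi⟩
  choose g hg using hchoice
  refine ⟨g, fun n i hi => ?_⟩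
  obtain ⟨hn, hiN⟩ := hN n i hi
  exact hB i hn (hg i hiN)

end

theorem stmt10 {I Ω : Type*} (U : Ultrafilter I)
    (hU : ∃ X : ℕ → Set I, X 0 = Set.univ ∧ (∀ n, X (n + 1) ⊆ X n) ∧
      (∀ n, X n ∈ U) ∧ ⋂ n, X n = ∅)
    (A : ℕ → I → Set Ω)
    (h : ∀ n : ℕ, {i : I | (⋂ k ≤ n, A k i).Nonempty} ∈ U) :
    ∃ g : I → Ω, ∀ k : ℕ, {i : I | g i ∈ A k i} ∈ U := by
  obtain ⟨X, -, hX_succ, hXU, hX_inter⟩ := hU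
  set B : ℕ → I → Set Ω := fun n i => ⋂ k ≤ n, A k i
  have hB : ∀ i, Antitone (B · i) := fun i _ _ hmn =>
    biInter_subset_biInter_left fun _ hk => le_trans hk hmn
  set Z : ℕ → Set I := fun n => X n ∩ {i | (B n i).Nonempty}
  have hZ : Antitone Z := fun m n hmn =>
    inter_subset_inter (antitone_nat_of_succ_le hX_succ hmn) fun i hi => hi.mono (hB i hmn)
  have hZ_inter : ⋂ n, Z n = ∅ :=
    subset_empty_iff.1 <| hX_inter ▸ iInter_mono fun n => inter_subset_left
  have : Nonempty Ω := by
    obtain ⟨i, x, -⟩ := U.nonempty_of_mem (h 0)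
    exact ⟨x⟩
  obtain ⟨g, hg⟩ := exists_forall_mem_of_antitone hZ hZ_inter hB fun n i hi => hi.2
  refine ⟨g, fun k => ?_⟩
  filter_upwards [hXU k, h k] with i hXi hBi
  exact mem_iInter₂.1 (hg k i ⟨hXi, hBi⟩) k le_rfl
end

section
/- (Loeb's key lemma in ultraproduct form) Let U be a nonprincipal ultrafilter on ℕ, Ω a set, and for each k ∈ ℕ let Aₖ : ℕ → Set(Ω) and A : ℕ → Set(Ω) be families of subsets. Suppose that for all k ≠ l, {i : Aₖ(i) ∩ Aₗ(i) = ∅} ∈ U, that for each k, {i : Aₖ(i) ⊆ A(i)} ∈ U, and that every function g : ℕ → Ω with {i : g(i) ∈ A(i)} ∈ U satisfies {i : g(i) ∈ Aₖ(i)} ∈ U for some k ∈ ℕ. Then there exists n ∈ ℕ such that every g with {i : g(i) ∈ A(i)} ∈ U satisfies {i : g(i) ∈ Aₖ(i)} ∈ U for some k ≤ n. -/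
/-! If no `n` works, then for every `n` some internal point of `A0` avoids `A 0, …, A n`.
Countable saturation of the ultrapower glues these into a single internal point of `A0`
avoiding every `A k`, contradicting the cover. -/

open Filter

theorem Ultrafilter.le_atTop_of_forall_singleton_notMem (U : Ultrafilter ℕ)
    (hU : ∀ n : ℕ, {n} ∉ U) : (U : Filter ℕ) ≤ atTop := by
  rcases U.le_cofinite_or_eq_pure with hcof | ⟨a, rfl⟩
  · exact Nat.cofinite_eq_atTop ▸ hcof
  · exact absurd (Ultrafilter.mem_pure.2 rfl) (hU a)

/-- Countable saturation of reduced powers over `ℕ` along a filter finer than `atTop`.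
The witness at index `i` is the one for the largest `n ≤ i` whose finite intersection
is satisfied at `i`. -/
theorem exists_forall_mem_of_forall_finite_inter {Ω : Type*} {F : Filter ℕ} (hF : F ≤ atTop)
    (S : ℕ → ℕ → Set Ω)
    (hfin : ∀ n, ∃ g : ℕ → Ω, {i | ∀ k ≤ n, g i ∈ S k i} ∈ F) :
    ∃ G : ℕ → Ω, ∀ n, {i | G i ∈ S n i} ∈ F := by
  classical
  choose g hg using hfin
  set B : ℕ → Set ℕ := fun n => {i | ∀ k ≤ n, g n i ∈ S k i}
  let N : ℕ → ℕ := fun i => Nat.findGreatest (i ∈ B ·) i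
  refine ⟨fun i => g (N i) i, fun n => ?_⟩
  filter_upwards [hg n, hF (mem_atTop n)] with i hiB hni
  have hspec : i ∈ B (N i) := Nat.findGreatest_spec (P := (i ∈ B ·)) hni hiB
  exact hspec n (Nat.le_findGreatest (P := (i ∈ B ·)) hni hiB)

theorem stmt12_general {Ω : Type*} (U : Ultrafilter ℕ) (hU : ∀ n : ℕ, {n} ∉ U)
    (A : ℕ → ℕ → Set Ω) (A0 : ℕ → Set Ω)
    (hcov : ∀ g : ℕ → Ω, {i : ℕ | g i ∈ A0 i} ∈ U →
      ∃ k : ℕ, {i : ℕ | g i ∈ A k i} ∈ U) :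
    ∃ n : ℕ, ∀ g : ℕ → Ω, {i : ℕ | g i ∈ A0 i} ∈ U →
      ∃ k ≤ n, {i : ℕ | g i ∈ A k i} ∈ U := by
  by_contra! hcon
  have hfin : ∀ n, ∃ g : ℕ → Ω, {i | ∀ k ≤ n, g i ∈ A0 i \ A k i} ∈ U := by
    intro n
    obtain ⟨g, hg0, hgA⟩ := hcon n
    refine ⟨g, ?_⟩
    have hout : ∀ k ∈ Set.Iic n, {i | g i ∉ A k i} ∈ U :=
      fun k hk => Ultrafilter.compl_mem_iff_notMem.2 (hgA k hk)
    filter_upwards [hg0, (biInter_mem (Set.finite_Iic n)).2 hout] with i hi0 hiA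
    exact fun k hk => ⟨hi0, Set.mem_iInter₂.1 hiA k hk⟩
  obtain ⟨G, hG⟩ := exists_forall_mem_of_forall_finite_inter
    (U.le_atTop_of_forall_singleton_notMem hU) _ hfin
  obtain ⟨k, hk⟩ := hcov G (mem_of_superset (hG 0) fun _ hi => hi.1)
  exact Ultrafilter.compl_mem_iff_notMem.1 (mem_of_superset (hG k) fun _ hi => hi.2) hk

theorem stmt12 {Ω : Type*} (U : Ultrafilter ℕ) (hU : ∀ n : ℕ, {n} ∉ U)
    (A : ℕ → ℕ → Set Ω) (A0 : ℕ → Set Ω)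
    (hdisj : ∀ k l : ℕ, k ≠ l → {i : ℕ | A k i ∩ A l i = ∅} ∈ U)
    (hsub : ∀ k : ℕ, {i : ℕ | A k i ⊆ A0 i} ∈ U)
    (hcov : ∀ g : ℕ → Ω, {i : ℕ | g i ∈ A0 i} ∈ U →
      ∃ k : ℕ, {i : ℕ | g i ∈ A k i} ∈ U) :
    ∃ n : ℕ, ∀ g : ℕ → Ω, {i : ℕ | g i ∈ A0 i} ∈ U →
      ∃ k ≤ n, {i : ℕ | g i ∈ A k i} ∈ U :=
  stmt12_general U hU A A0 hcov
end
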